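/- arXiv:2002.06768 — 2 statements merged into one kernel-verified Lean document; each statement's English description precedes it below -/
import Mathlib

section
/- Let M be a real symmetric positive semi-definite n×n matrix and H a real n×n matrix such that H + Hᵀ is negative semi-definite. Then every eigenvalue of M·H has non-positive real part. -/
/-! If `M H v = μ v` with `v ≠ 0`, put `u = H v`. Then `u* M u = μ (u* v)`, where `u* M u` is a
nonnegative real and `Re (u* v) = Re (v* H v) = ½ v* (H + Hᴴ) v ≤ 0`, so `Re μ ≤ 0` as soon as
`u* v ≠ 0`. If `u* v = 0`, then `u* M u = 0` forces `μ v = M u = 0`, i.e. `μ = 0`. -/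

open Matrix
open scoped ComplexOrder

lemma RCLike.re_nonpos_of_mul_eq_nonneg {𝕜 : Type*} [RCLike 𝕜] {μ c q : 𝕜} (hq : 0 ≤ q)
    (hc : re c ≤ 0) (hc0 : c ≠ 0) (h : μ * c = q) : re μ ≤ 0 := by
  obtain ⟨r, hr, rfl⟩ := nonneg_iff_exists_ofReal.mp hq
  rw [eq_div_of_mul_eq hc0 h, div_eq_mul_inv, re_ofReal_mul, inv_re]
  exact mul_nonpos_of_nonneg_of_nonpos hr (div_nonpos_of_nonpos_of_nonneg hc (normSq_nonneg c))

namespace Matrix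

variable {n 𝕜 : Type*} [Fintype n] [RCLike 𝕜]

lemma exists_mulVec_eq_smul_of_mem_spectrum {K : Type*} [Field K] [DecidableEq n]
    {A : Matrix n n K} {μ : K} (hμ : μ ∈ spectrum K A) : ∃ v ≠ 0, A *ᵥ v = μ • v := by
  rw [← spectrum_toLin', ← Module.End.hasEigenvalue_iff_mem_spectrum] at hμ
  obtain ⟨v, hv⟩ := hμ.exists_hasEigenvector
  exact ⟨v, hv.2, by simpa using hv.apply_eq_smul⟩

lemma map_ofReal_mul (A B : Matrix n n ℝ) :
    (A * B).map ((↑) : ℝ → 𝕜) = A.map (↑) * B.map (↑) :=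
  Matrix.map_mul (f := algebraMap ℝ 𝕜)

omit [Fintype n] in
lemma map_ofReal_neg_add_transpose (A : Matrix n n ℝ) :
    (-(A + Aᵀ)).map ((↑) : ℝ → 𝕜) = -(A.map (↑) + (A.map (↑))ᴴ) := by
  rw [Matrix.map_neg _ RCLike.ofReal_neg, Matrix.map_add _ RCLike.ofReal_add,
    ← conjTranspose_eq_transpose_of_trivial,
    conjTranspose_map _ fun _ ↦ (RCLike.conj_ofReal _).symm]

lemma PosSemidef.map_ofReal {A : Matrix n n ℝ} (hA : A.PosSemidef) :
    (A.map ((↑) : ℝ → 𝕜)).PosSemidef := by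
  classical
  open scoped MatrixOrder in
  obtain ⟨B, rfl⟩ := CStarAlgebra.nonneg_iff_eq_star_mul_self.mp hA.nonneg
  rw [star_eq_conjTranspose, map_ofReal_mul,
    conjTranspose_map _ fun _ ↦ (RCLike.conj_ofReal _).symm]
  exact posSemidef_conjTranspose_mul_self _

lemma dotProduct_conjTranspose_mulVec (B : Matrix n n 𝕜) (v : n → 𝕜) :
    star v ⬝ᵥ Bᴴ *ᵥ v = star (star v ⬝ᵥ B *ᵥ v) := by
  rw [dotProduct_mulVec, ← star_mulVec, star_dotProduct]

lemma re_dotProduct_mulVec_nonpos {B : Matrix n n 𝕜} (hB : (-(B + Bᴴ)).PosSemidef)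
    (v : n → 𝕜) : RCLike.re (star v ⬝ᵥ B *ᵥ v) ≤ 0 := by
  have h := (RCLike.nonneg_iff.mp (hB.dotProduct_mulVec_nonneg v)).1
  rw [neg_mulVec, add_mulVec, dotProduct_neg, dotProduct_add, dotProduct_conjTranspose_mulVec,
    map_neg, map_add, RCLike.star_def, RCLike.conj_re] at h
  linarith

theorem re_nonpos_of_mul_mulVec_eq_smul {A B : Matrix n n 𝕜} (hA : A.PosSemidef)
    (hB : (-(B + Bᴴ)).PosSemidef) {μ : 𝕜} {v : n → 𝕜} (hv : v ≠ 0)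
    (hμv : (A * B) *ᵥ v = μ • v) : RCLike.re μ ≤ 0 := by
  set u := B *ᵥ v
  have hAu : A *ᵥ u = μ • v := by rw [mulVec_mulVec, hμv]
  have hq : μ * (star u ⬝ᵥ v) = star u ⬝ᵥ A *ᵥ u := by
    rw [hAu, dotProduct_smul, smul_eq_mul]
  have hc : RCLike.re (star u ⬝ᵥ v) ≤ 0 := by
    rw [star_dotProduct, RCLike.star_def, RCLike.conj_re]
    exact re_dotProduct_mulVec_nonpos hB v
  by_cases hc0 : star u ⬝ᵥ v = 0
  · rw [hc0, mul_zero, eq_comm, hA.dotProduct_mulVec_zero_iff, hAu, smul_eq_zero] at hq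
    simp [hq.resolve_right hv]
  · exact RCLike.re_nonpos_of_mul_eq_nonneg (hA.dotProduct_mulVec_nonneg u) hc hc0 hq

end Matrix

/-- If `M` is real symmetric PSD and `H + Hᵀ` is negative semidefinite, then every
eigenvalue of `M * H` has nonpositive real part. -/
theorem stmt_5 (n : ℕ) (M H : Matrix (Fin n) (Fin n) ℝ)
    (hM : M.PosSemidef) (hH : (-(H + Hᵀ)).PosSemidef)
    (μ : ℂ) (hμ : μ ∈ spectrum ℂ ((M * H).map (Complex.ofReal))) :
    μ.re ≤ 0 := by
  have hMH : (M * H).map Complex.ofReal = M.map Complex.ofReal * H.map Complex.ofReal :=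
    map_ofReal_mul M H
  have hHH : (-(H + Hᵀ)).map Complex.ofReal =
      -(H.map Complex.ofReal + (H.map Complex.ofReal)ᴴ) :=
    map_ofReal_neg_add_transpose H
  obtain ⟨v, hv, hμv⟩ := exists_mulVec_eq_smul_of_mem_spectrum (hMH ▸ hμ)
  simpa using re_nonpos_of_mul_mulVec_eq_smul hM.map_ofReal (hHH ▸ hH.map_ofReal) hv hμv
end

section
/- Fix ε ∈ ℂ with Re(ε) ≤ 0 and ε ≠ 0. The quadratic equation λ² - (1+2ε)λ + ε = 0 (equivalently λ(λ-1)/(2λ-1) = ε) has two roots λ₁, λ₂, and for |ε| sufficiently small both roots satisfy |λᵢ| < 1. -/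
/-!
Write `z(z - 1) = ε(2z - 1)` for the equation. Multiplying by `conj (2z - 1)` and taking real
parts gives `Re ε · |2z - 1|² = (2 Re z - 1)(|z|² - Re z)`, so when `Re ε < 0` every root with
`Re z > 1/2` satisfies `|z|² < Re z ≤ |z|`, hence `|z| < 1`. For small `ε` a root of modulus
at least one would have `Re z > 1/2`, which is impossible.
-/

open ComplexConjugate

namespace Complex

lemma re_mul_sub_one_mul_conj (z : ℂ) :
    (z * (z - 1) * conj (2 * z - 1)).re = (2 * z.re - 1) * (normSq z - z.re) := by
  simp only [mul_re, mul_im, sub_re, sub_im, conj_re, conj_im, normSq_apply, one_re, one_im,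
    re_ofNat, im_ofNat]
  ring

lemma normSq_lt_re_of_mul_sub_one_eq {z ε : ℂ} (hε : ε.re < 0) (hz : 1 / 2 < z.re)
    (h : z * (z - 1) = ε * (2 * z - 1)) : normSq z < z.re := by
  have key : ε.re * normSq (2 * z - 1) = (2 * z.re - 1) * (normSq z - z.re) := by
    rw [← re_mul_sub_one_mul_conj, h, mul_assoc, mul_conj, re_mul_ofReal]
  have hpos : 0 < normSq (2 * z - 1) := by
    refine normSq_pos.2 (ne_of_apply_ne re ?_)
    simp only [sub_re, mul_re, re_ofNat, im_ofNat, zero_mul, sub_zero, one_re, zero_re]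
    linarith
  nlinarith [mul_neg_of_neg_of_pos hε hpos]

lemma norm_lt_one_of_normSq_lt_re {z : ℂ} (h : normSq z < z.re) : ‖z‖ < 1 := by
  rw [normSq_eq_norm_sq] at h
  nlinarith [re_le_norm z, norm_nonneg z]

/-- By Vieta the other root `1 + 2ε - z` has modulus `‖ε‖ / ‖z‖ ≤ ‖ε‖`. -/
lemma half_lt_re_of_sq_sub_add_eq_zero {z ε : ℂ} (h : z ^ 2 - (1 + 2 * ε) * z + ε = 0)
    (hε : ‖ε‖ < 1 / 6) (hz : 1 ≤ ‖z‖) : 1 / 2 < z.re := by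
  set w := 1 + 2 * ε - z with hw
  have hvieta : z * w = ε := by linear_combination -h
  have hw_le : ‖w‖ ≤ ‖ε‖ := by
    rw [← hvieta, norm_mul]
    exact le_mul_of_one_le_left (norm_nonneg w) hz
  have hre : z.re = 1 + 2 * ε.re - w.re := by simp [hw]
  have := abs_le.1 (abs_re_le_norm ε)
  have := abs_le.1 (abs_re_le_norm w)
  linarith

end Complex

/-- There exists `δ > 0` such that for every `ε` with `Re ε < 0` and `0 < |ε| < δ`,
both roots of `λ² - (1 + 2ε)λ + ε = 0` have modulus less than one. -/
theorem stmt_14 :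
    ∃ δ > (0 : ℝ), ∀ ε : ℂ, ε.re < 0 → ε ≠ 0 → ‖ε‖ < δ →
      ∀ lam : ℂ, lam ^ 2 - (1 + 2 * ε) * lam + ε = 0 → ‖lam‖ < 1 := by
  refine ⟨1 / 6, by norm_num, fun ε hre _ hε lam hroot => ?_⟩
  by_contra! hlam
  have hhalf := Complex.half_lt_re_of_sq_sub_add_eq_zero hroot hε hlam
  have hdisc := Complex.normSq_lt_re_of_mul_sub_one_eq hre hhalf (by linear_combination hroot)
  exact hlam.not_gt (Complex.norm_lt_one_of_normSq_lt_re hdisc)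
end
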